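/- arXiv:0712.0663 — 4 statements merged into one kernel-verified Lean document; each statement's English description precedes it below -/
import Mathlib

section
/- If every vertex of a (possibly infinite) digraph G has finite in-degree, then G has a quasi-kernel. -/
/-- There is a directed path of length at most `n` from `x` to `y`. -/
def PathLe {V : Type*} (E : V → V → Prop) (n : ℕ) (x y : V) : Prop :=
  ∃ k ≤ n, ∃ f : ℕ → V, f 0 = x ∧ f k = y ∧ ∀ i < k, E (f i) (f (i + 1))

/-- A directed path of length at most `n` from `x` to `y` all of whose vertices lie in `W`. -/
def PathLeIn {V : Type*} (E : V → V → Prop) (W : Set V) (n : ℕ) (x y : V) : Prop :=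
  ∃ k ≤ n, ∃ f : ℕ → V, f 0 = x ∧ f k = y ∧ (∀ i ≤ k, f i ∈ W) ∧ ∀ i < k, E (f i) (f (i + 1))

/-- `A` spans no edges of `E` (in either direction). -/
def Indep {V : Type*} (E : V → V → Prop) (A : Set V) : Prop :=
  ∀ a ∈ A, ∀ b ∈ A, ¬ E a b

/-- The induced subgraph on `W` is in the class `O_n`: some independent set `A ⊆ W`
reaches every vertex of `W` by a directed path of length at most `n` inside `W`. -/
def OutClass {V : Type*} (E : V → V → Prop) (n : ℕ) (W : Set V) : Prop :=
  ∃ A ⊆ W, Indep E A ∧ ∀ v ∈ W, ∃ a ∈ A, PathLeIn E W n a v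

/-- The induced subgraph on `W` is in the class `I_n`: some independent set `A ⊆ W`
is reached from every vertex of `W` by a directed path of length at most `n` inside `W`. -/
def InClass {V : Type*} (E : V → V → Prop) (n : ℕ) (W : Set V) : Prop :=
  ∃ A ⊆ W, Indep E A ∧ ∀ v ∈ W, ∃ a ∈ A, PathLeIn E W n v a

/-- The induced subgraph on `W` is in `IO(m, ℓ)`. -/
def IOClass {V : Type*} (E : V → V → Prop) (m ℓ : ℕ) (W : Set V) : Prop :=
  ∃ V₁ V₂ : Set V, V₁ ∪ V₂ = W ∧ Disjoint V₁ V₂ ∧ InClass E m V₁ ∧ OutClass E ℓ V₂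

/-- `E` is a tournament: no loops and exactly one direction between distinct vertices. -/
def IsTournament {V : Type*} (E : V → V → Prop) : Prop :=
  (∀ x, ¬ E x x) ∧ ∀ x y, x ≠ y → (E x y ↔ ¬ E y x)

/-!
The finite case is an induction: pick a vertex `v`, delete `v` and its out-neighbours, and take a
quasi-kernel `A'` of what is left. If some vertex of `A'` points to `v`, then `A'` already reaches
`v` in one step and its out-neighbours in two; otherwise `A' ∪ {v}` is independent and works.

The infinite case follows by compactness of `V → Bool`: with finite in-degrees only finitely many
vertices reach a given `v` within two steps, so "the set with indicator `g` reaches `v`" is a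
closed condition on `g`, and so is independence.
-/

section PathLe

variable {V : Type*} {E : V → V → Prop}

theorem pathLe_zero_iff {a b : V} : PathLe E 0 a b ↔ a = b := by
  constructor
  · rintro ⟨k, hk, f, rfl, rfl, -⟩
    rw [Nat.le_zero.1 hk]
  · rintro rfl
    exact ⟨0, le_rfl, fun _ => a, rfl, rfl, nofun⟩

theorem pathLe_succ_iff {n : ℕ} {a c : V} :
    PathLe E (n + 1) a c ↔ PathLe E n a c ∨ ∃ b, PathLe E n a b ∧ E b c := by
  constructor
  · rintro ⟨k, hk, f, rfl, rfl, hf⟩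
    rcases Nat.lt_or_eq_of_le hk with hk | rfl
    · exact .inl ⟨k, Nat.le_of_lt_succ hk, f, rfl, rfl, hf⟩
    · exact .inr ⟨f n, ⟨n, le_rfl, f, rfl, rfl, fun i hi => hf i (hi.trans n.lt_succ_self)⟩,
        hf n n.lt_succ_self⟩
  · rintro (⟨k, hk, f, rfl, rfl, hf⟩ | ⟨b, ⟨k, hk, f, rfl, rfl, hf⟩, hbc⟩)
    · exact ⟨k, hk.trans n.le_succ, f, rfl, rfl, hf⟩
    · refine ⟨k + 1, Nat.succ_le_succ hk, fun i => if i ≤ k then f i else c, by simp, by simp,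
        ?_⟩
      intro i hi
      rcases Nat.lt_or_eq_of_le (Nat.le_of_lt_succ hi) with hi | rfl
      · simpa [hi.le, Nat.succ_le_of_lt hi] using hf i hi
      · simpa using hbc

theorem pathLe_refl (n : ℕ) (a : V) : PathLe E n a a :=
  ⟨0, n.zero_le, fun _ => a, rfl, rfl, nofun⟩

theorem PathLe.mono {m n : ℕ} {a b : V} (hmn : m ≤ n) (h : PathLe E m a b) :
    PathLe E n a b := by
  obtain ⟨k, hk, f, hf⟩ := h
  exact ⟨k, hk.trans hmn, f, hf⟩

theorem PathLe.snoc {n : ℕ} {a b c : V} (h : PathLe E n a b) (hbc : E b c) :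
    PathLe E (n + 1) a c :=
  pathLe_succ_iff.2 (.inr ⟨b, h, hbc⟩)

theorem finite_setOf_pathLe (hfin : ∀ v, {u | E u v}.Finite) (n : ℕ) (v : V) :
    {a | PathLe E n a v}.Finite := by
  induction n generalizing v with
  | zero => simp [pathLe_zero_iff]
  | succ n ih =>
    refine ((ih v).union ((hfin v).biUnion fun b _ => ih b)).subset fun a ha => ?_
    simpa [pathLe_succ_iff, and_comm] using ha

end PathLe

section QuasiKernel

variable {V : Type*} {E : V → V → Prop}

/-- Either `v` already has an in-neighbour in `A`, or `v` can be added to `A`. -/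
theorem Indep.exists_insert_reaching (hirr : ∀ v, ¬ E v v) {A : Set V} (hA : Indep E A) {v : V}
    (hv : ∀ a ∈ A, ¬ E v a) :
    ∃ B, A ⊆ B ∧ B ⊆ insert v A ∧ Indep E B ∧ ∃ q ∈ B, PathLe E 1 q v := by
  by_cases hq : ∃ q ∈ A, E q v
  · obtain ⟨q, hqA, hqv⟩ := hq
    exact ⟨A, subset_rfl, Set.subset_insert v A, hA, q, hqA, (pathLe_refl 0 q).snoc hqv⟩
  · push Not at hq
    refine ⟨insert v A, Set.subset_insert v A, subset_rfl, ?_, v, Set.mem_insert v A,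
      pathLe_refl 1 v⟩
    rintro a (rfl | ha) b (rfl | hb)
    exacts [hirr _, hv _ hb, hq _ ha, hA _ ha _ hb]

theorem exists_quasiKernel_finset (hirr : ∀ v, ¬ E v v) (W : Finset V) :
    ∃ A ⊆ (W : Set V), Indep E A ∧ ∀ v ∈ W, ∃ a ∈ A, PathLe E 2 a v := by
  classical
  induction W using Finset.strongInduction with
  | _ W ih =>
  rcases W.eq_empty_or_nonempty with rfl | ⟨v, hv⟩
  · exact ⟨∅, by simp, by simp [Indep], by simp⟩
  set W' := W.filter fun u => u ≠ v ∧ ¬ E v u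
  have hW' : W' ⊂ W := Finset.filter_ssubset.2 ⟨v, hv, by simp⟩
  obtain ⟨A', hA'W', hA', hcov'⟩ := ih W' hW'
  obtain ⟨A, hA'A, hAv, hA, q, hqA, hqv⟩ :=
    hA'.exists_insert_reaching hirr fun a ha => (Finset.mem_filter.1 (hA'W' ha)).2.2
  have hA'W : A' ⊆ W := hA'W'.trans (Finset.coe_subset.2 hW'.subset)
  refine ⟨A, hAv.trans (Set.insert_subset hv hA'W), hA, fun u hu => ?_⟩
  by_cases huv : u = v
  · exact ⟨q, hqA, huv ▸ hqv.mono one_le_two⟩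
  by_cases hvu : E v u
  · exact ⟨q, hqA, hqv.snoc hvu⟩
  obtain ⟨a, ha, hau⟩ := hcov' u (Finset.mem_filter.2 ⟨hu, huv, hvu⟩)
  exact ⟨a, hA'A ha, hau⟩

end QuasiKernel

theorem exists_indep_forall_exists_mem_of_finite {V ι : Type*} (E : V → V → Prop)
    (R : ι → Set V) (hR : ∀ i, (R i).Finite)
    (h : ∀ t : Finset ι, ∃ A, Indep E A ∧ ∀ i ∈ t, ∃ a ∈ A, a ∈ R i) :
    ∃ A, Indep E A ∧ ∀ i, ∃ a ∈ A, a ∈ R i := by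
  classical
  let S : Set (V → Bool) := {g | ∀ a b, E a b → ¬ (g a = true ∧ g b = true)}
  let T : ι → Set (V → Bool) := fun i => ⋃ a ∈ R i, (fun g => g a) ⁻¹' {true}
  have hS : IsClosed S := by
    simp only [S, Set.ofPred_forall]
    exact isClosed_iInter fun a => isClosed_iInter fun b => isClosed_iInter fun _ =>
      (isClosed_discrete {p : Bool × Bool | ¬ (p.1 = true ∧ p.2 = true)}).preimage
        (by fun_prop : Continuous fun g : V → Bool => (g a, g b))
  have hT : ∀ i, IsClosed (T i) := fun i =>
    (hR i).isClosed_biUnion fun a _ => (isClosed_discrete {true}).preimage (continuous_apply a)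
  have hST : ∀ t : Finset ι, (S ∩ ⋂ i ∈ t, T i).Nonempty := by
    intro t
    obtain ⟨A, hA, hcov⟩ := h t
    refine ⟨fun x => decide (x ∈ A), fun a b hab ⟨ha, hb⟩ => ?_,
      Set.mem_iInter₂.2 fun i hi => ?_⟩
    · exact hA a (by simpa using ha) b (by simpa using hb) hab
    · obtain ⟨a, ha, hai⟩ := hcov i hi
      exact Set.mem_iUnion₂.2 ⟨a, hai, by simpa using ha⟩
  obtain ⟨g, hgS, hgT⟩ := hS.isCompact.inter_iInter_nonempty T hT hST
  refine ⟨{a | g a = true}, fun a ha b hb hab => hgS a b hab ⟨ha, hb⟩, fun i => ?_⟩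
  obtain ⟨a, hai, hga⟩ := Set.mem_iUnion₂.1 (Set.mem_iInter.1 hgT i)
  exact ⟨a, hga, hai⟩

/-- If every vertex has finite in-degree then the digraph has a quasi-kernel. -/
theorem finite_in_degree_quasi_kernel {V : Type*} (E : V → V → Prop)
    (hirr : ∀ v, ¬ E v v) (hfin : ∀ v : V, {u : V | E u v}.Finite) :
    ∃ A : Set V, Indep E A ∧ ∀ v : V, ∃ a ∈ A, PathLe E 2 a v := by
  refine exists_indep_forall_exists_mem_of_finite E (fun v => {a | PathLe E 2 a v})
    (finite_setOf_pathLe hfin 2) fun t => ?_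
  obtain ⟨A, -, hA, hcov⟩ := exists_quasiKernel_finset hirr t
  exact ⟨A, hA, hcov⟩
end

section
/- If a digraph G has a partition (A₁,…,A_k) into finitely many parts such that each induced subgraph G[A_i] is hereditary in IO(1,1), then G ∈ IO(2,2). -/
/-! Induction on the number of parts: a part `X ∈ IO(1,1)` is merged into a set `Q` that is
hereditarily in `IO(2,2)`. Write `X = S₁ ∪ S₂`, where `A` absorbs `S₁` and `B` dominates `S₂`
within distance one. The vertices of `Q` with an edge into `A` join the in-part, the remaining
ones with an edge from `B` join the out-part, and the rest `Q'` of `Q` splits as `R₁ ∪ R₂` with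
witnesses `A'` and `B'`. Since `Q'` sends no edge into `A`, the vertices of `A` with an edge into
`A'` can be traded for `A'` at the cost of one extra step, keeping the witness independent;
dually for the out-part. Out-classes are in-classes of the reversed digraph. -/

section

variable {V : Type*} {E : V → V → Prop}

namespace PathLeIn

variable {W W' : Set V} {m n : ℕ} {x y z : V}

lemma mono (hW : W ⊆ W') (hmn : m ≤ n) (h : PathLeIn E W m x y) : PathLeIn E W' n x y := by
  obtain ⟨k, hk, f, h0, hk', hmem, hedge⟩ := h
  exact ⟨k, hk.trans hmn, f, h0, hk', fun i hi => hW (hmem i hi), hedge⟩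

lemma refl (hx : x ∈ W) : PathLeIn E W n x x :=
  ⟨0, Nat.zero_le n, fun _ => x, rfl, rfl, fun _ _ => hx, fun _ hi => absurd hi (Nat.not_lt_zero _)⟩

lemma snoc (h : PathLeIn E W n x y) (hyz : E y z) (hz : z ∈ W) : PathLeIn E W (n + 1) x z := by
  obtain ⟨k, hk, f, rfl, rfl, hmem, hedge⟩ := h
  refine ⟨k + 1, by omega, fun i => if i ≤ k then f i else z, by simp, by simp, ?_, ?_⟩
  · intro i _
    dsimp only
    split_ifs with hi
    exacts [hmem i hi, hz]
  · intro i hi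
    rcases Nat.lt_succ_iff_lt_or_eq.1 hi with hi | rfl
    · simpa [hi.le, Nat.succ_le_of_lt hi] using hedge i hi
    · simpa using hyz

lemma flip (h : PathLeIn E W n x y) : PathLeIn (flip E) W n y x := by
  obtain ⟨k, hk, f, rfl, rfl, hmem, hedge⟩ := h
  refine ⟨k, hk, fun i => f (k - i), by simp, by simp, fun i _ => hmem _ (Nat.sub_le k i), ?_⟩
  intro i hi
  have hsucc : k - i = k - (i + 1) + 1 := by omega
  simpa only [Function.flip_def, hsucc] using hedge (k - (i + 1)) (by omega)

end PathLeIn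

lemma Indep.flip {A : Set V} (h : Indep E A) : Indep (flip E) A :=
  fun a ha b hb => h b hb a ha

lemma outClass_iff_inClass_flip {n : ℕ} {W : Set V} : OutClass E n W ↔ InClass (flip E) n W := by
  constructor <;> rintro ⟨A, hAW, hA, hreach⟩ <;>
    exact ⟨A, hAW, hA.flip, fun v hv => (hreach v hv).imp fun a ⟨ha, hp⟩ => ⟨ha, hp.flip⟩⟩

def IsAbsorbing (E : V → V → Prop) (n : ℕ) (W A : Set V) : Prop :=
  A ⊆ W ∧ Indep E A ∧ ∀ v ∈ W, ∃ a ∈ A, PathLeIn E W n v a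

lemma inClass_iff_exists_isAbsorbing {n : ℕ} {W : Set V} :
    InClass E n W ↔ ∃ A, IsAbsorbing E n W A :=
  Iff.rfl

section Merge

variable {S T R A A' : Set V}

lemma IsAbsorbing.union_of_forall_exists_adj (hA : IsAbsorbing E 1 S A)
    (hT : ∀ v ∈ T, ∃ a ∈ A, E v a) : IsAbsorbing E 1 (S ∪ T) A := by
  obtain ⟨hAS, hAind, hreach⟩ := hA
  refine ⟨hAS.trans Set.subset_union_left, hAind, ?_⟩
  rintro v (hv | hv)
  · exact (hreach v hv).imp fun a ⟨ha, hp⟩ => ⟨ha, hp.mono Set.subset_union_left le_rfl⟩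
  · obtain ⟨a, ha, hva⟩ := hT v hv
    have hv0 : PathLeIn E (S ∪ T) 0 v v := PathLeIn.refl (Or.inr hv)
    exact ⟨a, ha, hv0.snoc hva (Or.inl (hAS ha))⟩

lemma inClass_two_union_of_isAbsorbing (hA : IsAbsorbing E 1 S A) (hA' : IsAbsorbing E 2 R A')
    (hA'A : ∀ a' ∈ A', ∀ a ∈ A, ¬ E a' a) : InClass E 2 (S ∪ R) := by
  obtain ⟨hAS, hAind, hreach⟩ := hA
  obtain ⟨hA'R, hA'ind, hreach'⟩ := hA'
  refine ⟨{a | a ∈ A ∧ ∀ a' ∈ A', ¬ E a a'} ∪ A', ?_, ?_, ?_⟩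
  · rintro a (ha | ha)
    exacts [Or.inl (hAS ha.1), Or.inr (hA'R ha)]
  · rintro a (ha | ha) b (hb | hb)
    exacts [hAind a ha.1 b hb.1, ha.2 b hb, hA'A a ha b hb.1, hA'ind a ha b hb]
  rintro v (hv | hv)
  · obtain ⟨a, ha, hva⟩ := hreach v hv
    have hva' : PathLeIn E (S ∪ R) 1 v a := hva.mono Set.subset_union_left le_rfl
    by_cases hkeep : ∀ a' ∈ A', ¬ E a a'
    · exact ⟨a, Or.inl ⟨ha, hkeep⟩, hva'.mono le_rfl (by norm_num)⟩
    · push Not at hkeep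
      obtain ⟨a', ha', haa'⟩ := hkeep
      exact ⟨a', Or.inr ha', hva'.snoc haa' (Or.inr (hA'R ha'))⟩
  · exact (hreach' v hv).imp fun a ⟨ha, hp⟩ => ⟨Or.inr ha, hp.mono Set.subset_union_right le_rfl⟩

end Merge

lemma ioClass_empty (m ℓ : ℕ) : IOClass E m ℓ ∅ :=
  ⟨∅, ∅, Set.union_empty ∅, Set.disjoint_empty ∅,
    ⟨∅, le_rfl, fun _ h => h.elim, fun _ h => h.elim⟩,
    ⟨∅, le_rfl, fun _ h => h.elim, fun _ h => h.elim⟩⟩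

lemma ioClass_union {X Q : Set V} (hXQ : Disjoint X Q) (hX : IOClass E 1 1 X)
    (hQ : ∀ W ⊆ Q, IOClass E 2 2 W) : IOClass E 2 2 (X ∪ Q) := by
  obtain ⟨S₁, S₂, rfl, hS, hS₁, hS₂⟩ := hX
  obtain ⟨A, hA⟩ := inClass_iff_exists_isAbsorbing.1 hS₁
  obtain ⟨B, hB⟩ := inClass_iff_exists_isAbsorbing.1 (outClass_iff_inClass_flip.1 hS₂)
  set T₁ := {q | q ∈ Q ∧ ∃ a ∈ A, E q a}
  set T₂ := {q | q ∈ Q ∧ q ∉ T₁ ∧ ∃ b ∈ B, E b q}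
  obtain ⟨R₁, R₂, hR, hRd, hR₁, hR₂⟩ := hQ (Q \ (T₁ ∪ T₂)) Set.sdiff_subset
  obtain ⟨A', hA'⟩ := inClass_iff_exists_isAbsorbing.1 hR₁
  obtain ⟨B', hB'⟩ := inClass_iff_exists_isAbsorbing.1 (outClass_iff_inClass_flip.1 hR₂)
  replace hR₁ : R₁ ⊆ Q \ (T₁ ∪ T₂) := hR ▸ Set.subset_union_left
  replace hR₂ : R₂ ⊆ Q \ (T₁ ∪ T₂) := hR ▸ Set.subset_union_right
  refine ⟨S₁ ∪ T₁ ∪ R₁, S₂ ∪ T₂ ∪ R₂, ?_, ?_, ?_, ?_⟩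
  · have hT : T₁ ∪ T₂ ⊆ Q := Set.union_subset (fun q hq => hq.1) fun q hq => hq.1
    calc S₁ ∪ T₁ ∪ R₁ ∪ (S₂ ∪ T₂ ∪ R₂) = S₁ ∪ S₂ ∪ (T₁ ∪ T₂ ∪ (R₁ ∪ R₂)) := by
          ext v; simp only [Set.mem_union]; tauto
      _ = S₁ ∪ S₂ ∪ Q := by rw [hR, Set.union_sdiff_cancel hT]
  · have hXQ' : ∀ ⦃v⦄, v ∈ S₁ ∪ S₂ → v ∉ Q := Set.disjoint_left.1 hXQ
    rw [Set.disjoint_left]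
    rintro v ((h | h) | h) ((h' | h') | h')
    exacts [Set.disjoint_left.1 hS h h', hXQ' (Or.inl h) h'.1, hXQ' (Or.inl h) (hR₂ h').1,
      hXQ' (Or.inr h') h.1, h'.2.1 h, (hR₂ h').2 (Or.inl h),
      hXQ' (Or.inr h') (hR₁ h).1, (hR₁ h).2 (Or.inr h'), Set.disjoint_left.1 hRd h h']
  · refine inClass_two_union_of_isAbsorbing (hA.union_of_forall_exists_adj fun v hv => hv.2) hA' ?_
    intro a' ha' a ha haa'
    exact (hR₁ (hA'.1 ha')).2 (Or.inl ⟨(hR₁ (hA'.1 ha')).1, a, ha, haa'⟩)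
  · refine outClass_iff_inClass_flip.2
      (inClass_two_union_of_isAbsorbing (hB.union_of_forall_exists_adj fun v hv => hv.2.2) hB' ?_)
    intro b' hb' b hb hbb'
    obtain ⟨hb'Q, hb'T⟩ := hR₂ (hB'.1 hb')
    exact hb'T (Or.inr ⟨hb'Q, fun h => hb'T (Or.inl h), b, hb, hbb'⟩)

lemma ioClass_of_subset_union {X Q : Set V} (hX : ∀ W ⊆ X, IOClass E 1 1 W)
    (hQ : ∀ W ⊆ Q, IOClass E 2 2 W) : ∀ W ⊆ X ∪ Q, IOClass E 2 2 W := by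
  intro W hW
  rw [← Set.inter_union_sdiff W X]
  refine ioClass_union Set.disjoint_sdiff_inter.symm (hX _ Set.inter_subset_right) fun U hU => ?_
  exact hQ U fun u hu => (hW (hU hu).1).resolve_left (hU hu).2

lemma ioClass_of_subset_biUnion {ι : Type*} (P : ι → Set V) (s : Finset ι)
    (hP : ∀ i ∈ s, ∀ W ⊆ P i, IOClass E 1 1 W) : ∀ W ⊆ ⋃ i ∈ s, P i, IOClass E 2 2 W := by
  classical
  induction s using Finset.induction_on with
  | empty =>
    intro W hW
    obtain rfl : W = ∅ := by simpa using hW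
    exact ioClass_empty 2 2
  | insert i s _ ih =>
    rw [Finset.set_biUnion_insert]
    exact ioClass_of_subset_union (hP i (s.mem_insert_self i))
      (ih fun j hj => hP j (Finset.mem_insert_of_mem hj))

end

theorem partition_hereditary_io11_general {V : Type*} (E : V → V → Prop) (k : ℕ)
    (P : Fin (k + 1) → Set V)
    (hcover : (⋃ i, P i) = Set.univ)
    (hher : ∀ i, ∀ W ⊆ P i, IOClass E 1 1 W) :
    IOClass E 2 2 Set.univ :=
  ioClass_of_subset_biUnion P Finset.univ (fun i _ => hher i) Set.univ (by simp [hcover])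

/-- A digraph partitioned into finitely many parts each hereditary in `IO(1,1)`
is in `IO(2,2)`. -/
theorem partition_hereditary_io11 {V : Type*} (E : V → V → Prop) (k : ℕ)
    (P : Fin (k + 1) → Set V)
    (hcover : (⋃ i, P i) = Set.univ)
    (hdisj : ∀ i j, i ≠ j → Disjoint (P i) (P j))
    (hher : ∀ i, ∀ W ⊆ P i, IOClass E 1 1 W) :
    IOClass E 2 2 Set.univ :=
  partition_hereditary_io11_general E k P hcover hher
end

section
/- In any tournament G ∈ O_∞, if G ∈ O_n for some n ≥ 3, then G ∈ O₃. Specifically, if V = Out_G^n(x) but V ≠ Out_G^{n-1}(x), then for any y ∈ Out_G^n(x)∖Out_G^{n-1}(x), V = Out_G^3(y). -/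
/-!
Let `y` lie at distance exactly `n` from `x`. Every vertex `w` within distance `n - 2` of `x` is
beaten by `y`: otherwise `w → y` would put `y` within distance `n - 1`. Any vertex `v` ends a path
`x = f 0 → ⋯ → f k = v` with `k ≤ n`, so `f (k - 2)` is within distance `n - 2` of `x` and
`y → f (k - 2) → ⋯ → f k = v` has length at most `3`.
-/

namespace PathLe

variable {V : Type*} {E : V → V → Prop} {m n : ℕ} {x y z : V}

theorem mono_s14 (h : PathLe E m x y) (hmn : m ≤ n) : PathLe E n x y := by
  obtain ⟨k, hk, f, hf⟩ := h
  exact ⟨k, hk.trans hmn, f, hf⟩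

theorem snoc_s14 (h : PathLe E n x y) (hyz : E y z) : PathLe E (n + 1) x z := by
  obtain ⟨k, hk, f, rfl, rfl, hf⟩ := h
  refine ⟨k + 1, by omega, fun i => if i ≤ k then f i else z, by simp, by simp, fun i hi => ?_⟩
  rcases Nat.lt_or_ge i k with hik | hik
  · simpa [hik.le, Nat.succ_le_of_lt hik] using hf i hik
  · obtain rfl : i = k := by omega
    simpa using hyz

theorem cons (hxy : E x y) (h : PathLe E n y z) : PathLe E (n + 1) x z := by
  obtain ⟨k, hk, f, rfl, rfl, hf⟩ := h
  refine ⟨k + 1, by omega, fun i => if i = 0 then x else f (i - 1), by simp, by simp,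
    fun i hi => ?_⟩
  rcases i with _ | i
  · simpa using hxy
  · simpa using hf i (by omega)

end PathLe

theorem pathLe_of_chain {V : Type*} {E : V → V → Prop} {f : ℕ → V} {j k : ℕ}
    (hf : ∀ i < k, E (f i) (f (i + 1))) (hjk : j ≤ k) : PathLe E (k - j) (f j) (f k) :=
  ⟨k - j, le_rfl, fun i => f (j + i), rfl, by simp [Nat.add_sub_cancel' hjk],
    fun i hi => by simpa [add_assoc] using hf (j + i) (by omega)⟩

theorem IsTournament.adj_of_pathLe_of_not_pathLe {V : Type*} {E : V → V → Prop}
    (hE : IsTournament E) {m : ℕ} {x y w : V} (hw : PathLe E m x w)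
    (hy : ¬ PathLe E (m + 1) x y) : E y w := by
  have hwy : w ≠ y := by
    rintro rfl
    exact hy (hw.mono_s14 m.le_succ)
  by_contra hyw
  exact hy (hw.snoc_s14 ((hE.2 w y hwy).2 hyw))

theorem out_n_to_out_three_general {V : Type*} (E : V → V → Prop) (htour : IsTournament E)
    (n : ℕ) (hn : 3 ≤ n) (x y : V)
    (hx : ∀ v : V, PathLe E n x v)
    (hy₂ : ¬ PathLe E (n - 1) x y) :
    ∀ v : V, PathLe E 3 y v := by
  intro v
  obtain ⟨k, hk, f, rfl, rfl, hf⟩ := hx v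
  have hprefix : PathLe E (n - 2) (f 0) (f (k - 2)) :=
    (pathLe_of_chain (fun i _ => hf i (by omega)) (Nat.zero_le (k - 2))).mono_s14 (by omega)
  have hyf : E y (f (k - 2)) :=
    htour.adj_of_pathLe_of_not_pathLe hprefix (by rwa [show n - 2 + 1 = n - 1 by omega])
  exact ((pathLe_of_chain hf (Nat.sub_le k 2)).cons hyf).mono_s14 (by omega)

/-- In a tournament in `O_∞`, membership in `O_n` for some `n ≥ 3` gives membership in `O₃`:
if `V = Out^n(x)` but `V ≠ Out^{n-1}(x)` and `y ∈ Out^n(x) ∖ Out^{n-1}(x)`,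
then `V = Out³(y)`. -/
theorem out_n_to_out_three {V : Type*} (E : V → V → Prop) (htour : IsTournament E)
    (hOinf : ∃ x : V, ∀ v : V, Relation.ReflTransGen E x v)
    (n : ℕ) (hn : 3 ≤ n) (x y : V)
    (hx : ∀ v : V, PathLe E n x v)
    (hy₁ : PathLe E n x y) (hy₂ : ¬ PathLe E (n - 1) x y) :
    ∀ v : V, PathLe E 3 y v :=
  out_n_to_out_three_general E htour n hn x y hx hy₂
end

section
/- There exists an infinite tournament that is in O₃ but not in O₂, i.e., some vertex reaches every vertex by a directed path of length at most 3, but no vertex reaches all vertices by directed paths of length at most 2. -/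
namespace PathLe

variable {V : Type*} {E : V → V → Prop} {n : ℕ} {x y : V}

theorem zero_iff : PathLe E 0 x y ↔ x = y := by
  constructor
  · rintro ⟨k, hk, f, rfl, rfl, -⟩
    rw [Nat.le_zero.mp hk]
  · rintro rfl
    exact ⟨0, le_rfl, fun _ => x, rfl, rfl, by simp⟩

theorem succ_iff : PathLe E (n + 1) x y ↔ x = y ∨ ∃ z, E x z ∧ PathLe E n z y := by
  constructor
  · rintro ⟨_ | k, hk, f, rfl, rfl, hf⟩
    · exact .inl rfl
    · exact .inr ⟨f 1, hf 0 k.succ_pos,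
        k, by omega, (f <| · + 1), rfl, rfl, fun i hi => hf (i + 1) (by omega)⟩
  · rintro (rfl | ⟨z, hxz, k, hk, f, rfl, rfl, hf⟩)
    · exact ⟨0, Nat.zero_le _, fun _ => x, rfl, rfl, by simp⟩
    · refine ⟨k + 1, by omega, fun i => if i = 0 then x else f (i - 1), rfl, by simp, ?_⟩
      rintro (_ | i) hi
      · simpa using hxz
      · simpa using hf i (by omega)

end PathLe

def cycleTournament : Option (Fin 3 × ℤ) → Option (Fin 3 × ℤ) → Prop
  | none, none => False
  | none, some (i, _) => i = 0
  | some (i, _), none => i ≠ 0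
  | some (i, m), some (j, n) => if i = j then m < n else j = i + 1

namespace cycleTournament

@[simp] theorem not_none_none : ¬ cycleTournament none none := id

@[simp] theorem none_some (i : Fin 3) (m : ℤ) : cycleTournament none (some (i, m)) ↔ i = 0 := .rfl

@[simp] theorem some_none (i : Fin 3) (m : ℤ) : cycleTournament (some (i, m)) none ↔ i ≠ 0 := .rfl

@[simp] theorem some_some (i j : Fin 3) (m n : ℤ) :
    cycleTournament (some (i, m)) (some (j, n)) ↔ if i = j then m < n else j = i + 1 := .rfl

theorem isTournament : IsTournament cycleTournament := by
  refine ⟨?_, ?_⟩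
  · rintro (_ | ⟨i, m⟩) <;> simp
  · rintro (_ | ⟨i, m⟩) (_ | ⟨j, n⟩) hne <;> grind [none_some, some_none, some_some]

theorem pathLe_three_root (v : Option (Fin 3 × ℤ)) : PathLe cycleTournament 3 none v := by
  simp only [PathLe.succ_iff, PathLe.zero_iff]
  rcases v with _ | ⟨i, m⟩
  · exact .inl rfl
  refine .inr ⟨some (0, m), ?_⟩
  fin_cases i
  · simp
  · exact ⟨rfl, .inr ⟨some (1, m), by simp, .inl rfl⟩⟩
  · exact ⟨rfl, .inr ⟨some (1, m), by simp, .inr ⟨some (2, m), by simp, rfl⟩⟩⟩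

/-- The out-neighbours of the root form copy `0`, which beats only copies `0` and `1`. -/
theorem not_pathLe_two_root : ¬ PathLe cycleTournament 2 none (some (2, 0)) := by
  simp only [PathLe.succ_iff, PathLe.zero_iff]
  rintro (h | ⟨_ | ⟨j, n⟩, hz, h | ⟨_ | ⟨k, l⟩, hw, h⟩⟩) <;> simp_all

/-- Leaving copy `i` upwards, to copy `i + 1`, or (when `i ≠ 0`) to the root, one never gets an
edge back down into copy `i`. -/
theorem not_pathLe_two_pred (i : Fin 3) (m : ℤ) :
    ¬ PathLe cycleTournament 2 (some (i, m)) (some (i, m - 1)) := by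
  simp only [PathLe.succ_iff, PathLe.zero_iff]
  rintro (h | ⟨_ | ⟨j, n⟩, hz, h | ⟨_ | ⟨k, l⟩, hw, h⟩⟩) <;>
    grind [none_some, some_none, some_some]

end cycleTournament

/-- There is an infinite tournament in `O₃ ∖ O₂`. -/
theorem exists_tournament_out3_not_out2 :
    ∃ (V : Type) (E : V → V → Prop), Infinite V ∧ IsTournament E ∧
      (∃ x : V, ∀ v : V, PathLe E 3 x v) ∧
      ¬ ∃ x : V, ∀ v : V, PathLe E 2 x v := by
  refine ⟨_, cycleTournament, inferInstance, cycleTournament.isTournament,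
    ⟨none, cycleTournament.pathLe_three_root⟩, ?_⟩
  rintro ⟨_ | ⟨i, m⟩, hx⟩
  · exact cycleTournament.not_pathLe_two_root (hx _)
  · exact cycleTournament.not_pathLe_two_pred i m (hx _)
end
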